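/- Fix β ∈ (1,2) and let α, α′ ∈ (0,2−β). Let (k₊,k₋) be the kneading invariants of (β,α) and (k₊′,k₋′) those of (β,α′). Then k₋ ≺ k₋′ ≺ k₊ ≺ k₊′ in the lexicographic order if and only if α < α′. -/

import Mathlib

noncomputable section

/-- The upper intermediate β-transformation `T⁺_{β,α}` on `[0,1]`. -/
def Tpos (β α : ℝ) (x : ℝ) : ℝ :=
  if x = (1 - α) / β then 0 else Int.fract (β * x + α)

/-- The lower intermediate β-transformation `T⁻_{β,α}` on `[0,1]`. -/
def Tneg (β α : ℝ) (x : ℝ) : ℝ :=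
  if x = (1 - α) / β then 1 else Int.fract (β * x + α)

/-- The itinerary `τ⁺_{β,α}(x)`: index `n` (from 0) is the `(n+1)`-st entry;
entry is `false` (i.e. 0) iff the `n`-th iterate is `< c`. -/
def tauPos (β α x : ℝ) : ℕ → Bool :=
  fun n => if (Tpos β α)^[n] x < (1 - α) / β then false else true

/-- The itinerary `τ⁻_{β,α}(x)`: entry is `false` (i.e. 0) iff the iterate is `≤ c`. -/
def tauNeg (β α x : ℝ) : ℕ → Bool :=
  fun n => if (Tneg β α)^[n] x ≤ (1 - α) / β then false else true

/-- The kneading invariant `k₊` of `(β,α)`. -/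
def kPlus (β α : ℝ) : ℕ → Bool := tauPos β α ((1 - α) / β)

/-- The kneading invariant `k₋` of `(β,α)`. -/
def kMinus (β α : ℝ) : ℕ → Bool := tauNeg β α ((1 - α) / β)

/-- The kneading space `Ω_{β,α}`. -/
def OmegaSet (β α : ℝ) : Set (ℕ → Bool) :=
  (tauPos β α '' Set.Icc 0 1) ∪ (tauNeg β α '' Set.Icc 0 1)

/-- `Ω` is a subshift of finite type: there is a finite set of finite forbidden words
such that `Ω` is exactly the set of sequences avoiding them. -/
def IsSFT (Ω : Set (ℕ → Bool)) : Prop :=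
  ∃ F : Finset (List Bool),
    Ω = {ω | ∀ m n : ℕ, List.ofFn (fun i : Fin n => ω (m + i)) ∉ F}

/-- `T_{β,α}` has matching. -/
def HasMatching (β α : ℝ) : Prop :=
  ∃ n : ℕ, (Tpos β α)^[n] 0 = (Tneg β α)^[n] 1

/-- The matching time: the smallest `n` with `(T⁺)ⁿ(0) = (T⁻)ⁿ(1)`. -/
def matchingTime (β α : ℝ) : ℕ :=
  sInf {n : ℕ | (Tpos β α)^[n] 0 = (Tneg β α)^[n] 1}

/-- `T_{β,α}` and `T_{β,α'}` have the same matching: both have matching, with the same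
matching time `n`, and their kneading invariants agree in the first `n+1` entries. -/
def SameMatching (β α α' : ℝ) : Prop :=
  HasMatching β α ∧ HasMatching β α' ∧ matchingTime β α = matchingTime β α' ∧
    ∀ i ≤ matchingTime β α, kPlus β α i = kPlus β α' i ∧ kMinus β α i = kMinus β α' i

/-- The matching set `I(β,α)` (a subset of `(0, 2-β)`). -/
def matchInterval (β α : ℝ) : Set ℝ :=
  {α' | α' ∈ Set.Ioo (0 : ℝ) (2 - β) ∧ SameMatching β α α'}

/-- The parameter region `Δ`. -/
def DeltaSet : Set (ℝ × ℝ) :=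
  {p | p.1 ∈ Set.Ioo (1 : ℝ) 2 ∧ p.2 ∈ Set.Ioo (0 : ℝ) (2 - p.1)}

/-- A sequence in `{0,1}^ℕ` is periodic. -/
def IsPeriodicSeq (ω : ℕ → Bool) : Prop :=
  ∃ p : ℕ, 1 ≤ p ∧ ∀ n, ω (n + p) = ω n

/-- A sequence in `{0,1}^ℕ` is eventually periodic. -/
def IsEvPeriodicSeq (ω : ℕ → Bool) : Prop :=
  ∃ k : ℕ, IsPeriodicSeq (fun n => ω (n + k))

/-- Strict lexicographic order on `{0,1}^ℕ`: at the first index where they differ,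
`ω` has entry 0 and `ν` has entry 1. -/
def lexLt (ω ν : ℕ → Bool) : Prop :=
  ∃ n : ℕ, (∀ m < n, ω m = ν m) ∧ ω n = false ∧ ν n = true


/-
Let `c = (1 - α) / β`, `c' = (1 - α') / β` and follow the orbits `xₙ` of `c` under `T_{β,α}` and
`yₙ` of `c'` under `T_{β,α'}`, with digits `dₙ`, `eₙ`. On `[0,1]` each map is
`x ↦ β x + α - digit`, and `β c + α = β c' + α' = 1`. Hence, as long as the digits agree,
`y_{n+1} - x_{n+1} = β (yₙ - xₙ) + (α' - α) ≥ n (α' - α)`; since both orbits stay in `[0,1]`, the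
digits must eventually disagree, and at the first disagreement `xₙ ≤ yₙ`, which together with
`c' < c` forces `dₙ = 0`, `eₙ = 1`. So `α ↦ k₊` and `α ↦ k₋` are strictly increasing into the
(linear) lexicographic order, which gives both directions; the middle inequality `k₋' ≺ k₊` is
decided by the first digit.
-/
open Set

theorem lexLt_iff_toLex_lt {ω ν : ℕ → Bool} : lexLt ω ν ↔ toLex ω < toLex ν := by
  simp only [lexLt, ← Bool.lt_iff]
  rfl

theorem Int.fract_eq_sub_ite_of_mem_Ico {R : Type*} [Ring R] [LinearOrder R] [FloorRing R]
    [IsOrderedRing R] {t : R} (ht : t ∈ Ico 0 2) :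
    Int.fract t = t - if t < 1 then 0 else 1 := by
  split_ifs with h1
  · simpa using Int.fract_eq_self.mpr ⟨ht.1, h1⟩
  · refine Int.fract_eq_iff.mpr ⟨sub_nonneg.mpr (not_lt.mp h1), ?_, 1, by simp⟩
    rw [sub_lt_iff_lt_add, one_add_one_eq_two]
    exact ht.2

section Orbits

variable {β α α' : ℝ} {x y : ℕ → ℝ} {d e : ℕ → Bool}

theorem mul_sub_le_sub_of_digits_eq (hβ : 1 ≤ β) (hα : α ≤ α')
    (hx : ∀ n, x (n + 1) = β * x n + α - (d n).toNat)
    (hy : ∀ n, y (n + 1) = β * y n + α' - (e n).toNat)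
    (h₀ : β * x 0 + α = β * y 0 + α') {n : ℕ} (hde : ∀ m ≤ n, d m = e m) :
    n * (α' - α) ≤ y (n + 1) - x (n + 1) := by
  induction n with
  | zero =>
    rw [hx, hy, hde 0 le_rfl]
    simp only [CharP.cast_eq_zero, zero_mul]
    linarith
  | succ n ih =>
    have hdist := ih fun m hm => hde m (by omega)
    have hgap : 0 ≤ y (n + 1) - x (n + 1) :=
      (mul_nonneg n.cast_nonneg (sub_nonneg.mpr hα)).trans hdist
    rw [hx (n + 1), hy (n + 1), hde (n + 1) le_rfl]
    push_cast
    nlinarith [mul_nonneg (sub_nonneg.mpr hβ) hgap]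

theorem toLex_lt_of_orbits (hβ : 1 ≤ β) (hα : α < α')
    (hx : ∀ n, x (n + 1) = β * x n + α - (d n).toNat)
    (hy : ∀ n, y (n + 1) = β * y n + α' - (e n).toNat)
    (h₀ : β * x 0 + α = β * y 0 + α') (hxI : ∀ n, x n ∈ Icc 0 1) (hyI : ∀ n, y n ∈ Icc 0 1)
    (hde₀ : d 0 = e 0) (hmono : ∀ n, x n ≤ y n → d n ≤ e n) :
    toLex d < toLex e := by
  have hne : d ≠ e := by
    rintro rfl
    obtain ⟨N, hN⟩ := exists_nat_gt (1 / (α' - α))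
    have hdist := mul_sub_le_sub_of_digits_eq hβ hα.le hx hy h₀ (n := N) fun m _ => rfl
    have hx₀ := (hxI (N + 1)).1
    have hy₁ := (hyI (N + 1)).2
    rw [div_lt_iff₀ (by linarith)] at hN
    linarith
  refine (lt_or_gt_of_ne (toLex_inj.not.mpr hne)).resolve_right ?_
  rintro ⟨i, hagree, hlt⟩
  cases i with
  | zero => exact hlt.ne hde₀.symm
  | succ n =>
    have hdist := mul_sub_le_sub_of_digits_eq hβ hα.le hx hy h₀ (n := n)
      fun m hm => (hagree m (by omega)).symm
    have : (0 : ℝ) ≤ n * (α' - α) := mul_nonneg n.cast_nonneg (by linarith)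
    exact hlt.not_ge (hmono (n + 1) (by linarith))

end Orbits

section Kneading

variable {β α α' x : ℝ}

theorem mul_one_sub_div_add_cancel (hβ : β ≠ 0) : β * ((1 - α) / β) + α = 1 := by
  rw [mul_div_cancel₀ _ hβ]
  ring

theorem mul_add_lt_one_iff (hβ : 0 < β) : β * x + α < 1 ↔ x < (1 - α) / β := by
  rw [lt_div_iff₀ hβ]
  constructor <;> intro <;> linarith

theorem one_sub_div_mem_Icc (hβ : β ∈ Ioo 1 2) (hα : α ∈ Ioo 0 (2 - β)) :
    (1 - α) / β ∈ Icc 0 1 := by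
  have hβ₀ : 0 < β := by linarith [hβ.1]
  exact ⟨div_nonneg (by linarith [hα.2, hβ.1]) hβ₀.le,
    (div_le_one hβ₀).mpr (by linarith [hα.1, hβ.1])⟩

theorem mul_add_mem_Ico (hβ : β ∈ Ioo 1 2) (hα : α ∈ Ioo 0 (2 - β)) (hx : x ∈ Icc 0 1) :
    β * x + α ∈ Ico 0 2 := by
  have hβx : β * x ≤ β := mul_le_of_le_one_right (by linarith [hβ.1]) hx.2
  have : 0 ≤ β * x := mul_nonneg (by linarith [hβ.1]) hx.1
  exact ⟨by linarith [hα.1], by linarith [hα.2]⟩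

theorem Tpos_mem_Icc (β α x : ℝ) : Tpos β α x ∈ Icc 0 1 := by
  unfold Tpos
  split_ifs
  · simp
  · exact ⟨Int.fract_nonneg _, (Int.fract_lt_one _).le⟩

theorem Tneg_mem_Icc (β α x : ℝ) : Tneg β α x ∈ Icc 0 1 := by
  unfold Tneg
  split_ifs
  · simp
  · exact ⟨Int.fract_nonneg _, (Int.fract_lt_one _).le⟩

theorem Tpos_eq_mul_add_sub (hβ : β ∈ Ioo 1 2) (hα : α ∈ Ioo 0 (2 - β)) (hx : x ∈ Icc 0 1) :
    Tpos β α x = β * x + α - (tauPos β α x 0).toNat := by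
  have hβ₀ : 0 < β := by linarith [hβ.1]
  simp only [Tpos, tauPos, Function.iterate_zero, id_eq]
  by_cases hc : x = (1 - α) / β
  · simp [hc, mul_one_sub_div_add_cancel hβ₀.ne']
  · rw [if_neg hc, Int.fract_eq_sub_ite_of_mem_Ico (mul_add_mem_Ico hβ hα hx)]
    by_cases hlt : x < (1 - α) / β <;> simp [hlt, mul_add_lt_one_iff hβ₀]

theorem Tneg_eq_mul_add_sub (hβ : β ∈ Ioo 1 2) (hα : α ∈ Ioo 0 (2 - β)) (hx : x ∈ Icc 0 1) :
    Tneg β α x = β * x + α - (tauNeg β α x 0).toNat := by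
  have hβ₀ : 0 < β := by linarith [hβ.1]
  simp only [Tneg, tauNeg, Function.iterate_zero, id_eq]
  by_cases hc : x = (1 - α) / β
  · simp [hc, mul_one_sub_div_add_cancel hβ₀.ne']
  · rw [if_neg hc, Int.fract_eq_sub_ite_of_mem_Ico (mul_add_mem_Ico hβ hα hx)]
    by_cases hlt : x < (1 - α) / β <;> simp [hlt, mul_add_lt_one_iff hβ₀, Ne.le_iff_lt hc]

@[simp] theorem kPlus_zero (β α : ℝ) : kPlus β α 0 = true := by simp [kPlus, tauPos]

@[simp] theorem kMinus_zero (β α : ℝ) : kMinus β α 0 = false := by simp [kMinus, tauNeg]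

theorem kMinus_lexLt_kPlus (β α α' : ℝ) : lexLt (kMinus β α') (kPlus β α) :=
  ⟨0, nofun, kMinus_zero β α', kPlus_zero β α⟩

theorem kPlus_strictMonoOn (hβ : β ∈ Ioo 1 2) :
    StrictMonoOn (fun α => toLex (kPlus β α)) (Ioo 0 (2 - β)) := by
  intro α hα α' hα' h
  have hβ₀ : 0 < β := by linarith [hβ.1]
  have horbit {a : ℝ} (ha : a ∈ Ioo 0 (2 - β)) (n : ℕ) : (Tpos β a)^[n] ((1 - a) / β) ∈ Icc 0 1 :=
    (MapsTo.iterate (fun x _ => Tpos_mem_Icc β a x) n) (one_sub_div_mem_Icc hβ ha)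
  refine toLex_lt_of_orbits hβ.1.le h (fun n => ?_) (fun n => ?_)
    (by simp only [Function.iterate_zero, id_eq, mul_one_sub_div_add_cancel hβ₀.ne'])
    (horbit hα) (horbit hα') (by simp) fun n hxy => ?_
  · rw [Function.iterate_succ_apply']
    exact Tpos_eq_mul_add_sub hβ hα (horbit hα n)
  · rw [Function.iterate_succ_apply']
    exact Tpos_eq_mul_add_sub hβ hα' (horbit hα' n)
  · have : (1 - α') / β < (1 - α) / β := div_lt_div_of_pos_right (by linarith) hβ₀
    simp only [kPlus, tauPos]
    split_ifs <;> first | decide | linarith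

theorem kMinus_strictMonoOn (hβ : β ∈ Ioo 1 2) :
    StrictMonoOn (fun α => toLex (kMinus β α)) (Ioo 0 (2 - β)) := by
  intro α hα α' hα' h
  have hβ₀ : 0 < β := by linarith [hβ.1]
  have horbit {a : ℝ} (ha : a ∈ Ioo 0 (2 - β)) (n : ℕ) : (Tneg β a)^[n] ((1 - a) / β) ∈ Icc 0 1 :=
    (MapsTo.iterate (fun x _ => Tneg_mem_Icc β a x) n) (one_sub_div_mem_Icc hβ ha)
  refine toLex_lt_of_orbits hβ.1.le h (fun n => ?_) (fun n => ?_)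
    (by simp only [Function.iterate_zero, id_eq, mul_one_sub_div_add_cancel hβ₀.ne'])
    (horbit hα) (horbit hα') (by simp) fun n hxy => ?_
  · rw [Function.iterate_succ_apply']
    exact Tneg_eq_mul_add_sub hβ hα (horbit hα n)
  · rw [Function.iterate_succ_apply']
    exact Tneg_eq_mul_add_sub hβ hα' (horbit hα' n)
  · have : (1 - α') / β < (1 - α) / β := div_lt_div_of_pos_right (by linarith) hβ₀
    simp only [kMinus, tauNeg]
    split_ifs <;> first | decide | linarith

end Kneading

theorem kneading_monotone_iff (β α α' : ℝ)
    (hβ : β ∈ Set.Ioo (1 : ℝ) 2)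
    (hα : α ∈ Set.Ioo (0 : ℝ) (2 - β)) (hα' : α' ∈ Set.Ioo (0 : ℝ) (2 - β)) :
    (lexLt (kMinus β α) (kMinus β α') ∧ lexLt (kMinus β α') (kPlus β α) ∧
      lexLt (kPlus β α) (kPlus β α')) ↔ α < α' := by
  have hPlus : lexLt (kPlus β α) (kPlus β α') ↔ α < α' :=
    lexLt_iff_toLex_lt.trans ((kPlus_strictMonoOn hβ).lt_iff_lt hα hα')
  have hMinus : lexLt (kMinus β α) (kMinus β α') ↔ α < α' :=
    lexLt_iff_toLex_lt.trans ((kMinus_strictMonoOn hβ).lt_iff_lt hα hα')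
  exact ⟨fun h => hPlus.mp h.2.2, fun h => ⟨hMinus.mpr h, kMinus_lexLt_kPlus β α α', hPlus.mpr h⟩⟩
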